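/- Let ρ₀(x) = min(x,1-x) on I = (0,1). There is a constant C such that for every v ∈ C²([0,1]), ‖∂ₓv‖_{L^∞(I)} ≤ C (‖ρ₀ ∂ₓv‖_{L²(I)} + ‖ρ₀ ∂ₓ²v‖_{L²(I)} + ‖ρ₀² ∂ₓ²v‖_{L²(I)} + ‖ρ₀² ∂ₓ³v‖_{L²(I)} + ‖ρ₀² ∂ₓ⁴v‖_{L²(I)}) whenever v ∈ C⁴([0,1]). -/

import Mathlib

/-!
Put `ρ₀ x = min x (1 - x)` and `φ x = x (1 - x)`, so that `φ ≤ ρ₀ ≤ 2φ` on `[0, 1]`. Since `φ`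
vanishes at both ends, the derivative of `φ^(k+1) φ' w²` integrates to zero over `[0, 1]`;
expanding it with `φ'² = 1 - 4φ` and absorbing the cross terms by AM-GM yields the weighted Hardy
inequality `∫ φ^k w² ≤ 72 ∫ φ^(k+2) (w² + w'²)`, hence `‖ρ₀^k w‖² ≲ ‖ρ₀^(k+1) w‖² + ‖ρ₀^(k+1) w'‖²`.
Applied to `v'`, to `v''` and to `ρ₀ v'''`, it bounds `‖v'‖_{L²}` and `‖v''‖_{L²}` by the weighted
norms, and the one-dimensional Sobolev inequality `w(x)² ≤ 2‖w‖² + ‖w'‖²` for `w = v'` concludes.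
-/

open Set MeasureTheory intervalIntegral Topology

/-- The derivative of `x ↦ (x(1-x))^(k+1) (1-2x) f(x)²` at `x`, with `a = f x`, `b = f' x`. -/
def hardyIntegrand (k : ℕ) (x a b : ℝ) : ℝ :=
  (k + 1) * (x * (1 - x)) ^ k * (1 - 2 * x) ^ 2 * a ^ 2 - 2 * (x * (1 - x)) ^ (k + 1) * a ^ 2
    + 2 * (x * (1 - x)) ^ (k + 1) * (1 - 2 * x) * (a * b)

lemma pow_mul_sq_le_hardyIntegrand (k : ℕ) {x : ℝ} (hx : x ∈ Icc (0:ℝ) 1) (a b : ℝ) :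
    (x * (1 - x)) ^ k * a ^ 2 ≤
      2 / (k + 1) * hardyIntegrand k x a b + 72 * ((x * (1 - x)) ^ (k + 2) * (a ^ 2 + b ^ 2)) := by
  obtain ⟨hx0, hx1⟩ := hx
  set p := x * (1 - x)
  have hp : 0 ≤ p := mul_nonneg hx0 (by linarith)
  have hq : (1 - 2 * x) ^ 2 = 1 - 4 * p := by ring
  have hk : (0:ℝ) ≤ k := k.cast_nonneg
  -- `(k+1)(a/2 - 6pa)² ≥ 0` absorbs the `p a²` terms and `(a/2 + 2p(1-2x)b)² ≥ 0` the cross term.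
  have hinner : 0 ≤ (k + 1) / 2 * a ^ 2 - (4 * (k + 1) + 2) * p * a ^ 2
      + 2 * p * (1 - 2 * x) * (a * b) + 36 * (k + 1) * (p ^ 2 * (a ^ 2 + b ^ 2)) := by
    nlinarith [mul_nonneg (by linarith : (0:ℝ) ≤ k + 1) (sq_nonneg (a * (1 / 2 - 6 * p))),
      sq_nonneg (a / 2 + 2 * p * (1 - 2 * x) * b),
      mul_nonneg (mul_nonneg hp hp) (mul_nonneg (by nlinarith : 0 ≤ 1 - (1 - 2 * x) ^ 2)
        (sq_nonneg b)),
      mul_nonneg hk (mul_nonneg (mul_nonneg hp hp) (sq_nonneg b)),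
      mul_nonneg hk (sq_nonneg a), mul_nonneg hk (mul_nonneg hp (sq_nonneg a))]
  rw [← sub_nonneg]
  refine (mul_nonneg (by positivity : (0:ℝ) ≤ 2 / (k + 1))
    (mul_nonneg (pow_nonneg hp k) hinner)).trans_eq ?_
  rw [hardyIntegrand, pow_succ, pow_add, hq]
  field_simp
  ring

theorem integral_hardyIntegrand_eq_zero (k : ℕ) {f f' : ℝ → ℝ} (hf : ContinuousOn f (Icc 0 1))
    (hf' : ContinuousOn f' (Icc 0 1)) (hd : ∀ x ∈ Ioo (0:ℝ) 1, HasDerivAt f (f' x) x) :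
    ∫ x in (0:ℝ)..1, hardyIntegrand k x (f x) (f' x) = 0 := by
  have hF : ∀ x ∈ Ioo (0:ℝ) 1,
      HasDerivAt (fun x => (x * (1 - x)) ^ (k + 1) * (1 - 2 * x) * f x ^ 2)
        (hardyIntegrand k x (f x) (f' x)) x := by
    intro x hx
    have hφ : HasDerivAt (fun x : ℝ => x * (1 - x)) (1 - 2 * x) x :=
      ((hasDerivAt_id' x).fun_mul ((hasDerivAt_id' x).const_sub 1)).congr_deriv (by ring)
    refine (((hφ.fun_pow (k + 1)).fun_mul ((hasDerivAt_id' x).const_mul 2 |>.const_sub 1)).fun_mul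
      ((hd x hx).fun_pow 2)).congr_deriv ?_
    simp only [hardyIntegrand, Nat.add_sub_cancel, Nat.cast_add, Nat.cast_one, Nat.cast_ofNat]
    ring
  rw [integral_eq_sub_of_hasDerivAt_of_le zero_le_one (by fun_prop) hF
    (ContinuousOn.intervalIntegrable_of_Icc zero_le_one (by unfold hardyIntegrand; fun_prop))]
  simp

theorem integral_mul_one_sub_pow_mul_sq_le (k : ℕ) {f f' : ℝ → ℝ}
    (hf : ContinuousOn f (Icc 0 1)) (hf' : ContinuousOn f' (Icc 0 1))
    (hd : ∀ x ∈ Ioo (0:ℝ) 1, HasDerivAt f (f' x) x) :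
    ∫ x in (0:ℝ)..1, (x * (1 - x)) ^ k * f x ^ 2 ≤
      72 * ∫ x in (0:ℝ)..1, (x * (1 - x)) ^ (k + 2) * (f x ^ 2 + f' x ^ 2) := by
  have hint : ∀ {g : ℝ → ℝ}, ContinuousOn g (Icc 0 1) → IntervalIntegrable g volume 0 1 :=
    ContinuousOn.intervalIntegrable_of_Icc zero_le_one
  have hG : ContinuousOn (fun x => hardyIntegrand k x (f x) (f' x)) (Icc 0 1) := by
    unfold hardyIntegrand; fun_prop
  calc ∫ x in (0:ℝ)..1, (x * (1 - x)) ^ k * f x ^ 2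
      ≤ ∫ x in (0:ℝ)..1, (2 / (k + 1) * hardyIntegrand k x (f x) (f' x)
        + 72 * ((x * (1 - x)) ^ (k + 2) * (f x ^ 2 + f' x ^ 2))) :=
        integral_mono_on zero_le_one (hint (by fun_prop)) (hint (by fun_prop))
          fun x hx => pow_mul_sq_le_hardyIntegrand k hx (f x) (f' x)
    _ = 72 * ∫ x in (0:ℝ)..1, (x * (1 - x)) ^ (k + 2) * (f x ^ 2 + f' x ^ 2) := by
        rw [integral_add (hint (by fun_prop)) (hint (by fun_prop)),
          intervalIntegral.integral_const_mul, intervalIntegral.integral_const_mul,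
          integral_hardyIntegrand_eq_zero k hf hf' hd, mul_zero, zero_add]

lemma mul_one_sub_le_min {x : ℝ} (hx : x ∈ Icc (0:ℝ) 1) : x * (1 - x) ≤ min x (1 - x) := by
  obtain ⟨hx0, hx1⟩ := hx
  exact le_min (by nlinarith) (by nlinarith)

lemma min_le_two_mul_mul_one_sub {x : ℝ} (hx : x ∈ Icc (0:ℝ) 1) :
    min x (1 - x) ≤ 2 * (x * (1 - x)) := by
  obtain ⟨hx0, hx1⟩ := hx
  rcases le_total x (1 - x) with h | h
  · rw [min_eq_left h]; nlinarith
  · rw [min_eq_right h]; nlinarith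

theorem integral_min_pow_mul_sq_le (k : ℕ) {f f' : ℝ → ℝ}
    (hf : ContinuousOn f (Icc 0 1)) (hf' : ContinuousOn f' (Icc 0 1))
    (hd : ∀ x ∈ Ioo (0:ℝ) 1, HasDerivAt f (f' x) x) :
    ∫ x in (0:ℝ)..1, (min x (1 - x) ^ k * f x) ^ 2 ≤
      72 * 4 ^ k * ((∫ x in (0:ℝ)..1, (min x (1 - x) ^ (k + 1) * f x) ^ 2)
        + ∫ x in (0:ℝ)..1, (min x (1 - x) ^ (k + 1) * f' x) ^ 2) := by
  have hint : ∀ {g : ℝ → ℝ}, ContinuousOn g (Icc 0 1) → IntervalIntegrable g volume 0 1 :=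
    ContinuousOn.intervalIntegrable_of_Icc zero_le_one
  calc ∫ x in (0:ℝ)..1, (min x (1 - x) ^ k * f x) ^ 2
      ≤ ∫ x in (0:ℝ)..1, 4 ^ k * ((x * (1 - x)) ^ (2 * k) * f x ^ 2) := by
        refine integral_mono_on zero_le_one (hint (by fun_prop)) (hint (by fun_prop))
          fun x hx => ?_
        have hm : 0 ≤ min x (1 - x) := le_min hx.1 (by linarith [hx.2])
        have h : min x (1 - x) ^ k ≤ 2 ^ k * (x * (1 - x)) ^ k := by
          rw [← mul_pow]
          exact pow_le_pow_left₀ hm (min_le_two_mul_mul_one_sub hx) k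
        calc (min x (1 - x) ^ k * f x) ^ 2 = (min x (1 - x) ^ k) ^ 2 * f x ^ 2 := mul_pow _ _ _
          _ ≤ (2 ^ k * (x * (1 - x)) ^ k) ^ 2 * f x ^ 2 := by gcongr
          _ = _ := by
            rw [show (4:ℝ) ^ k = (2 ^ k) ^ 2 by rw [← pow_mul, mul_comm, pow_mul]; norm_num]
            ring
    _ ≤ 4 ^ k * (72 * ∫ x in (0:ℝ)..1, (x * (1 - x)) ^ (2 * k + 2) * (f x ^ 2 + f' x ^ 2)) := by
        rw [intervalIntegral.integral_const_mul]
        gcongr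
        exact integral_mul_one_sub_pow_mul_sq_le (2 * k) hf hf' hd
    _ ≤ 4 ^ k * (72 * ∫ x in (0:ℝ)..1,
          ((min x (1 - x) ^ (k + 1) * f x) ^ 2 + (min x (1 - x) ^ (k + 1) * f' x) ^ 2)) := by
        gcongr
        refine integral_mono_on zero_le_one (hint (by fun_prop)) (hint (by fun_prop))
          fun x hx => ?_
        have hφ : 0 ≤ x * (1 - x) := mul_nonneg hx.1 (by linarith [hx.2])
        have h := pow_le_pow_left₀ hφ (mul_one_sub_le_min hx) (k + 1)
        calc (x * (1 - x)) ^ (2 * k + 2) * (f x ^ 2 + f' x ^ 2)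
            = ((x * (1 - x)) ^ (k + 1)) ^ 2 * (f x ^ 2 + f' x ^ 2) := by ring
          _ ≤ (min x (1 - x) ^ (k + 1)) ^ 2 * (f x ^ 2 + f' x ^ 2) := by gcongr
          _ = _ := by ring
    _ = _ := by
        rw [integral_add (hint (by fun_prop)) (hint (by fun_prop))]
        ring

lemma abs_sq_sub_sq_le_integral {f f' : ℝ → ℝ} (hf : ContinuousOn f (Icc 0 1))
    (hf' : ContinuousOn f' (Icc 0 1)) (hd : ∀ x ∈ Ioo (0:ℝ) 1, HasDerivAt f (f' x) x)
    {a b : ℝ} (ha : 0 ≤ a) (hab : a ≤ b) (hb : b ≤ 1) :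
    |f b ^ 2 - f a ^ 2| ≤ ∫ x in (0:ℝ)..1, (f x ^ 2 + f' x ^ 2) := by
  have hsub : Icc a b ⊆ Icc 0 1 := Icc_subset_Icc ha hb
  have hint : ∀ {g : ℝ → ℝ}, ContinuousOn g (Icc 0 1) → IntervalIntegrable g volume a b :=
    fun hg => (hg.mono hsub).intervalIntegrable_of_Icc hab
  have hftc : ∫ x in a..b, 2 * (f x * f' x) = f b ^ 2 - f a ^ 2 :=
    integral_eq_sub_of_hasDerivAt_of_le hab ((hf.mono hsub).pow 2)
      (fun x hx => ((hd x ⟨ha.trans_lt hx.1, hx.2.trans_le hb⟩).fun_pow 2).congr_deriv (by ring))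
      (hint (by fun_prop))
  rw [← hftc]
  calc |∫ x in a..b, 2 * (f x * f' x)| ≤ ∫ x in a..b, |2 * (f x * f' x)| :=
        abs_integral_le_integral_abs hab
    _ ≤ ∫ x in a..b, (f x ^ 2 + f' x ^ 2) := by
        refine integral_mono_on hab (hint (by fun_prop)) (hint (by fun_prop)) fun x _ => ?_
        rw [abs_mul, abs_mul, abs_two, ← sq_abs (f x), ← sq_abs (f' x), ← mul_assoc]
        exact two_mul_le_add_sq _ _
    _ ≤ ∫ x in (0:ℝ)..1, (f x ^ 2 + f' x ^ 2) :=
        integral_mono_interval ha hab hb (Filter.Eventually.of_forall fun x => by positivity)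
          ((hf.pow 2).add (hf'.pow 2) |>.intervalIntegrable_of_Icc zero_le_one)

theorem sq_le_two_mul_integral_sq_add_integral_sq {f f' : ℝ → ℝ}
    (hf : ContinuousOn f (Icc 0 1)) (hf' : ContinuousOn f' (Icc 0 1))
    (hd : ∀ x ∈ Ioo (0:ℝ) 1, HasDerivAt f (f' x) x) {x : ℝ} (hx : x ∈ Icc (0:ℝ) 1) :
    f x ^ 2 ≤ 2 * (∫ y in (0:ℝ)..1, f y ^ 2) + ∫ y in (0:ℝ)..1, f' y ^ 2 := by
  have hint : ∀ {g : ℝ → ℝ}, ContinuousOn g (Icc 0 1) → IntervalIntegrable g volume 0 1 :=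
    ContinuousOn.intervalIntegrable_of_Icc zero_le_one
  set M := ∫ y in (0:ℝ)..1, (f y ^ 2 + f' y ^ 2) with hM
  have hlower : ∀ y ∈ Icc (0:ℝ) 1, f x ^ 2 - M ≤ f y ^ 2 := by
    intro y hy
    rcases le_total x y with h | h
    · linarith [(abs_le.1 (abs_sq_sub_sq_le_integral hf hf' hd hx.1 h hy.2)).1]
    · linarith [(abs_le.1 (abs_sq_sub_sq_le_integral hf hf' hd hy.1 h hx.2)).2]
  have havg := integral_mono_on zero_le_one intervalIntegrable_const (hint (by fun_prop)) hlower
  rw [intervalIntegral.integral_const, hM,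
    integral_add (hint (by fun_prop)) (hint (by fun_prop))] at havg
  simp only [sub_zero, one_smul] at havg
  linarith

lemma add_le_sq_add_sqrt {a b c : ℝ} (hc : 0 ≤ c) (ha : a ≤ c ^ 2) (hb : 0 ≤ b) :
    a + b ≤ (c + √b) ^ 2 := by
  nlinarith [Real.sq_sqrt hb, Real.sqrt_nonneg b]

theorem ContDiffOn.hasDerivAt_iteratedDerivWithin {𝕜 F : Type*} [NontriviallyNormedField 𝕜]
    [NormedAddCommGroup F] [NormedSpace 𝕜 F] {n : WithTop ℕ∞} {f : 𝕜 → F} {s : Set 𝕜} {m : ℕ}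
    {x : 𝕜} (hf : ContDiffOn 𝕜 n f s) (hm : m < n) (hs : UniqueDiffOn 𝕜 s) (hx : s ∈ 𝓝 x) :
    HasDerivAt (iteratedDerivWithin m f s) (iteratedDerivWithin (m + 1) f s x) x := by
  rw [iteratedDerivWithin_succ]
  exact ((hf.differentiableOn_iteratedDerivWithin hm hs) x
    (mem_of_mem_nhds hx)).hasDerivWithinAt.hasDerivAt hx

theorem abs_le_weighted_L2_norms {f₁ f₂ f₃ f₄ : ℝ → ℝ} (hc₁ : ContinuousOn f₁ (Icc 0 1))
    (hc₂ : ContinuousOn f₂ (Icc 0 1)) (hc₃ : ContinuousOn f₃ (Icc 0 1))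
    (hc₄ : ContinuousOn f₄ (Icc 0 1)) (hd₁ : ∀ x ∈ Ioo (0:ℝ) 1, HasDerivAt f₁ (f₂ x) x)
    (hd₂ : ∀ x ∈ Ioo (0:ℝ) 1, HasDerivAt f₂ (f₃ x) x)
    (hd₃ : ∀ x ∈ Ioo (0:ℝ) 1, HasDerivAt f₃ (f₄ x) x) {x : ℝ} (hx : x ∈ Icc (0:ℝ) 1) :
    |f₁ x| ≤ 144 * (√(∫ y in (0:ℝ)..1, (min y (1 - y) * f₁ y) ^ 2)
      + √(∫ y in (0:ℝ)..1, (min y (1 - y) * f₂ y) ^ 2)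
      + √(∫ y in (0:ℝ)..1, (min y (1 - y) ^ 2 * f₂ y) ^ 2)
      + √(∫ y in (0:ℝ)..1, (min y (1 - y) ^ 2 * f₃ y) ^ 2)
      + √(∫ y in (0:ℝ)..1, (min y (1 - y) ^ 2 * f₄ y) ^ 2)) := by
  have hsob := sq_le_two_mul_integral_sq_add_integral_sq hc₁ hc₂ hd₁ hx
  have H₁ := integral_min_pow_mul_sq_le 0 hc₁ hc₂ hd₁
  have H₂ := integral_min_pow_mul_sq_le 0 hc₂ hc₃ hd₂
  have H₃ := integral_min_pow_mul_sq_le 1 hc₃ hc₄ hd₃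
  simp only [pow_zero, one_mul, mul_one, zero_add, pow_one, Nat.reduceAdd] at H₁ H₂ H₃
  have hT : ∀ g : ℝ → ℝ, 0 ≤ ∫ y in (0:ℝ)..1, g y ^ 2 :=
    fun g => integral_nonneg zero_le_one fun y _ => sq_nonneg _
  set T₁ := ∫ y in (0:ℝ)..1, (min y (1 - y) * f₁ y) ^ 2
  set T₂ := ∫ y in (0:ℝ)..1, (min y (1 - y) * f₂ y) ^ 2
  set T₃ := ∫ y in (0:ℝ)..1, (min y (1 - y) ^ 2 * f₂ y) ^ 2
  set T₄ := ∫ y in (0:ℝ)..1, (min y (1 - y) ^ 2 * f₃ y) ^ 2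
  set T₅ := ∫ y in (0:ℝ)..1, (min y (1 - y) ^ 2 * f₄ y) ^ 2
  have hsum : T₁ + T₂ + T₃ + T₄ + T₅ ≤ (√T₁ + √T₂ + √T₃ + √T₄ + √T₅) ^ 2 :=
    add_le_sq_add_sqrt (by positivity) (add_le_sq_add_sqrt (by positivity)
      (add_le_sq_add_sqrt (by positivity) (add_le_sq_add_sqrt (Real.sqrt_nonneg _)
        (Real.sq_sqrt (hT _)).ge (hT _)) (hT _)) (hT _)) (hT _)
  refine abs_le_of_sq_le_sq ?_ (by positivity)
  rw [mul_pow]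
  linarith [(hT _ : 0 ≤ T₁), (hT _ : 0 ≤ T₂), (hT _ : 0 ≤ T₃)]

/-- Combination of (5.15), (5.38), (5.39): with `ρ₀ x = min x (1-x)`,
`‖∂ₓv‖_{L^∞(0,1)} ≤ C (‖ρ₀∂ₓv‖ + ‖ρ₀∂ₓ²v‖ + ‖ρ₀²∂ₓ²v‖ + ‖ρ₀²∂ₓ³v‖ + ‖ρ₀²∂ₓ⁴v‖)_{L²}`
for `v ∈ C⁴([0,1])`. -/
theorem Linfty_gradient_weighted_bound :
    ∃ C : ℝ, 0 < C ∧
      ∀ v : ℝ → ℝ, ContDiffOn ℝ 4 v (Icc (0:ℝ) 1) →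
        ∀ x ∈ Icc (0:ℝ) 1,
          |iteratedDerivWithin 1 v (Icc (0:ℝ) 1) x| ≤
            C * (Real.sqrt (∫ y in (0:ℝ)..1,
                    (min y (1 - y) * iteratedDerivWithin 1 v (Icc (0:ℝ) 1) y) ^ 2)
                + Real.sqrt (∫ y in (0:ℝ)..1,
                    (min y (1 - y) * iteratedDerivWithin 2 v (Icc (0:ℝ) 1) y) ^ 2)
                + Real.sqrt (∫ y in (0:ℝ)..1,
                    ((min y (1 - y)) ^ 2 * iteratedDerivWithin 2 v (Icc (0:ℝ) 1) y) ^ 2)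
                + Real.sqrt (∫ y in (0:ℝ)..1,
                    ((min y (1 - y)) ^ 2 * iteratedDerivWithin 3 v (Icc (0:ℝ) 1) y) ^ 2)
                + Real.sqrt (∫ y in (0:ℝ)..1,
                    ((min y (1 - y)) ^ 2 * iteratedDerivWithin 4 v (Icc (0:ℝ) 1) y) ^ 2)) := by
  refine ⟨144, by norm_num, fun v hv x hx => ?_⟩
  have hs : UniqueDiffOn ℝ (Icc (0:ℝ) 1) := uniqueDiffOn_Icc zero_lt_one
  have hc : ∀ m : ℕ, m ≤ 4 → ContinuousOn (iteratedDerivWithin m v (Icc 0 1)) (Icc 0 1) :=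
    fun m hm => hv.continuousOn_iteratedDerivWithin (by exact_mod_cast hm) hs
  have hd : ∀ m : ℕ, m < 4 → ∀ y ∈ Ioo (0:ℝ) 1, HasDerivAt (iteratedDerivWithin m v (Icc 0 1))
      (iteratedDerivWithin (m + 1) v (Icc 0 1) y) y :=
    fun m hm y hy => hv.hasDerivAt_iteratedDerivWithin (by exact_mod_cast hm) hs
      (Icc_mem_nhds hy.1 hy.2)
  exact abs_le_weighted_L2_norms (hc 1 (by norm_num)) (hc 2 (by norm_num)) (hc 3 (by norm_num))
    (hc 4 (by norm_num)) (hd 1 (by norm_num)) (hd 2 (by norm_num)) (hd 3 (by norm_num)) hx
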